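/- Fix an integer N ≥ 1 and real phases φ = (φ_{jk})_{1≤j,k≤N}. For unit vectors ψ₁, ψ₂ ∈ ℂ^N define the N×N matrix μ(φ,ψ₁,ψ₂) with entries μ_{α₁α₂} = Σ_{l=1}^{N} exp(i(φ_{α₁ l} − φ_{α₂ l})) · ψ₁(α₁) · conj(ψ₁(α₂)) · |ψ₂(l)|². Then the average of Tr(μ²) over ψ₁ and ψ₂ taken as the first columns of two independent Haar-random unitaries in U(N) equals (N² + 2N³ + N⁴·Tr ρ(φ)²) / (N²(N+1)²), where ρ(φ) = A(φ)A(φ)†/N² and A(φ)_{jk} = exp(i φ_{jk}). -/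

import Mathlib

/-!
Write `ψ₁, ψ₂` for the two random columns and `A = uniMat N φ`. Expanding the trace, `Tr μ²` is the
sum over `a, b, l, l'` of the phase kernel `A_{al} Ā_{bl} A_{bl'} Ā_{al'}` against
`|ψ₁ a|² |ψ₁ b|² |ψ₂ l|² |ψ₂ l'|²`, so by independence only the moments `E |ψ a|² |ψ b|²` enter.
Left invariance under permutation matrices makes them depend only on whether `a = b`. Invariance
under `(1 + i S) / √2` (`S` the transposition matrix of `a, b`, a self-adjoint involution) composed
with diagonal phases gives `E |ψ a|⁴ = E |ψ a + ω ψ b|⁴ / 4` for `ω ∈ {±1, ±i}`, and summing over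
the four phases yields `E |ψ a|⁴ = 2 E |ψ a|² |ψ b|²`. Finally `∑ |ψ a|² = 1` fixes the scale:
`E |ψ a|² |ψ b|² = (1 + δ_{ab}) / (N (N + 1))`. Against these weights the kernel's two diagonals
contribute `N³` each, their intersection `N²`, and its full sum is `N⁴ Tr ρ²`.
-/

open Matrix MeasureTheory

/-- The unimodular matrix with phases `φ`: entries `exp(i φ_{jk})`. -/
noncomputable def uniMat (N : ℕ) (φ : Fin N × Fin N → ℝ) : Matrix (Fin N) (Fin N) ℂ :=
  Matrix.of fun j k => Complex.exp (Complex.I * (φ (j, k) : ℂ))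

/-- The random-phase density matrix `ρ(φ) = A(φ) A(φ)ᴴ / N²`. -/
noncomputable def uniRho (N : ℕ) (φ : Fin N × Fin N → ℝ) : Matrix (Fin N) (Fin N) ℂ :=
  ((N : ℂ) ^ 2)⁻¹ • (uniMat N φ * (uniMat N φ)ᴴ)

/-- The reduced density matrix `μ(φ,ψ₁,ψ₂)` obtained by applying the diagonal unitary
with phases `exp(i φ_{αl})` to `ψ₁ ⊗ ψ₂` and tracing out the second factor:
`μ_{α₁α₂} = Σ_l exp(i(φ_{α₁l} − φ_{α₂l})) ψ₁(α₁) conj(ψ₁(α₂)) |ψ₂(l)|²`. -/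
noncomputable def rdm (N : ℕ) (φ : Fin N × Fin N → ℝ) (ψ₁ ψ₂ : Fin N → ℂ) :
    Matrix (Fin N) (Fin N) ℂ :=
  Matrix.of fun α₁ α₂ => ∑ l,
    Complex.exp (Complex.I * ((φ (α₁, l) : ℂ) - (φ (α₂, l) : ℂ))) *
      ψ₁ α₁ * (starRingEnd ℂ) (ψ₁ α₂) * (‖ψ₂ l‖ : ℂ) ^ 2

instance Matrix.compactSpace_unitaryGroup {n 𝕜 : Type*} [Fintype n] [DecidableEq n] [RCLike 𝕜] :
    CompactSpace (unitaryGroup n 𝕜) := by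
  refine isCompact_iff_compactSpace.mp <|
    (isCompact_univ_pi fun _ => isCompact_univ_pi fun _ => isCompact_closedBall (0 : 𝕜) 1)
      |>.of_isClosed_subset (isClosed_unitary (R := Matrix n n 𝕜)) fun U hU => ?_
  simpa using fun i j => entry_norm_bound_of_unitary hU i j

theorem Continuous.integrable_of_compactSpace {X E : Type*} [TopologicalSpace X] [CompactSpace X]
    [MeasurableSpace X] [OpensMeasurableSpace X] [NormedAddCommGroup E] {μ : Measure X}
    [IsFiniteMeasure μ] {f : X → E} (hf : Continuous f) : Integrable f μ :=
  hf.integrable_of_hasCompactSupport (.of_compactSpace f)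

theorem smul_one_add_I_smul_mem_unitary {A : Type*} [Ring A] [StarRing A] [Algebra ℂ A]
    [StarModule ℂ A] {P : A} (hP : IsSelfAdjoint P) (hP2 : P * P = 1) :
    ((Real.sqrt 2 : ℂ)⁻¹ • (1 + Complex.I • P)) ∈ unitary A := by
  have hs : (Real.sqrt 2 : ℂ)⁻¹ * (Real.sqrt 2 : ℂ)⁻¹ = 2⁻¹ := by
    rw [← mul_inv, ← Complex.ofReal_mul, Real.mul_self_sqrt zero_le_two]; norm_num
  have hstar : star ((Real.sqrt 2 : ℂ)⁻¹ • (1 + Complex.I • P)) =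
      (Real.sqrt 2 : ℂ)⁻¹ • (1 - Complex.I • P) := by
    simp [star_smul, hP.star_eq, sub_eq_add_neg]
  rw [Unitary.mem_iff, hstar]
  constructor <;>
  · simp only [smul_mul_smul, hs, sub_mul, add_mul, mul_sub, mul_add, one_mul, mul_one,
      Complex.I_mul_I, hP2, neg_one_smul]
    module

namespace Matrix

variable {n : Type*} [Fintype n] [DecidableEq n]

theorem permMatrix_mem_unitaryGroup {R : Type*} [CommRing R] [StarRing R] (σ : Equiv.Perm n) :
    σ.permMatrix R ∈ unitaryGroup n R := by
  rw [mem_unitaryGroup_iff, star_eq_conjTranspose, conjTranspose_permMatrix, ← permMatrix_mul,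
    inv_mul_cancel, permMatrix_one]

theorem diagonal_mem_unitaryGroup {𝕜 : Type*} [RCLike 𝕜] {d : n → 𝕜} (hd : ∀ i, ‖d i‖ = 1) :
    diagonal d ∈ unitaryGroup n 𝕜 := by
  rw [mem_unitaryGroup_iff, star_eq_conjTranspose, diagonal_conjTranspose, diagonal_mul_diagonal,
    ← diagonal_one]
  congr 1
  ext i
  simp [RCLike.mul_conj, hd]

@[fun_prop]
theorem continuous_unitaryGroup_apply {R : Type*} [CommRing R] [StarRing R] [TopologicalSpace R]
    (i j : n) : Continuous fun U : unitaryGroup n R => (U : Matrix n n R) i j :=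
  (continuous_apply_apply i j).comp continuous_subtype_val

theorem sum_norm_sq_apply_of_mem_unitaryGroup {𝕜 : Type*} [RCLike 𝕜] {U : Matrix n n 𝕜}
    (hU : U ∈ unitaryGroup n 𝕜) (j : n) : ∑ i, ‖U i j‖ ^ 2 = 1 := by
  have h := congr_fun₂ (mem_unitaryGroup_iff'.mp hU) j j
  simp only [mul_apply, star_apply, RCLike.star_def, RCLike.conj_mul, one_apply_eq] at h
  exact_mod_cast h

end Matrix

theorem Complex.norm_add_mul_pow_four_sum_phases (x y : ℂ) :
    ‖x + y‖ ^ 4 + ‖x - y‖ ^ 4 + ‖x + I * y‖ ^ 4 + ‖x - I * y‖ ^ 4 =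
      4 * (‖x‖ ^ 2 * ‖x‖ ^ 2) + 4 * (‖y‖ ^ 2 * ‖y‖ ^ 2) + 16 * (‖x‖ ^ 2 * ‖y‖ ^ 2) := by
  have h4 : ∀ z : ℂ, ‖z‖ ^ 4 = ‖z‖ ^ 2 * ‖z‖ ^ 2 := fun z => by ring
  simp only [h4, Complex.sq_norm, Complex.normSq_apply, add_re, add_im, sub_re, sub_im, mul_re,
    mul_im, I_re, I_im]
  ring

theorem Fintype.sum_ite_fst_eq_snd {α M : Type*} [Fintype α] [DecidableEq α] [AddCommMonoid M]
    (f : α × α → M) : ∑ p : α × α, (if p.1 = p.2 then f p else 0) = ∑ a, f (a, a) := by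
  simp [Fintype.sum_prod_type]

theorem integral_integral_sum_sum_mul {X Y ι κ 𝕜 : Type*} [MeasurableSpace X] [MeasurableSpace Y]
    [RCLike 𝕜] [Fintype ι] [Fintype κ] {μ : Measure X} {ν : Measure Y} (K : ι → κ → 𝕜)
    {f : X → ι → 𝕜} {g : Y → κ → 𝕜} (hf : ∀ i, Integrable (f · i) μ)
    (hg : ∀ k, Integrable (g · k) ν) :
    ∫ x, ∫ y, ∑ i, ∑ k, K i k * f x i * g y k ∂ν ∂μ =
      ∑ i, ∑ k, K i k * (∫ x, f x i ∂μ) * ∫ y, g y k ∂ν := by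
  have inner : ∀ x, ∫ y, ∑ i, ∑ k, K i k * f x i * g y k ∂ν =
      ∑ i, ∑ k, K i k * f x i * ∫ y, g y k ∂ν := fun x => by
    rw [integral_finsetSum _ fun i _ => integrable_finsetSum _ fun k _ => (hg k).const_mul _]
    refine Finset.sum_congr rfl fun i _ => ?_
    rw [integral_finsetSum _ fun k _ => (hg k).const_mul _]
    simp only [integral_const_mul]
  simp only [inner]
  rw [integral_finsetSum _ fun i _ => integrable_finsetSum _ fun k _ =>
    ((hf i).const_mul _).mul_const _]
  refine Finset.sum_congr rfl fun i _ => ?_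
  rw [integral_finsetSum _ fun k _ => ((hf i).const_mul _).mul_const _]
  simp only [integral_mul_const, integral_const_mul]

section HaarColumn

variable {n : Type*} [Fintype n] [DecidableEq n]
  [MeasurableSpace (unitaryGroup n ℂ)] [BorelSpace (unitaryGroup n ℂ)]
  (μ : Measure (unitaryGroup n ℂ))

theorem integral_comp_mulVec_col [μ.IsMulLeftInvariant] {E : Type*} [NormedAddCommGroup E]
    [NormedSpace ℝ E] (F : (n → ℂ) → E) {V : Matrix n n ℂ} (hV : V ∈ unitaryGroup n ℂ) (j : n) :
    ∫ U, F (V *ᵥ fun i => (U : Matrix n n ℂ) i j) ∂μ =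
      ∫ U, F (fun i => (U : Matrix n n ℂ) i j) ∂μ :=
  integral_mul_left_eq_self (fun U : unitaryGroup n ℂ => F fun i => (U : Matrix n n ℂ) i j) ⟨V, hV⟩

noncomputable def colMoment (j a b : n) : ℝ :=
  ∫ U, ‖(U : Matrix n n ℂ) a j‖ ^ 2 * ‖(U : Matrix n n ℂ) b j‖ ^ 2 ∂μ

theorem colMoment_perm [μ.IsMulLeftInvariant] (σ : Equiv.Perm n) (j a b : n) :
    colMoment μ j (σ a) (σ b) = colMoment μ j a b := by
  simpa [colMoment, permMatrix_mulVec] using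
    integral_comp_mulVec_col μ (fun v => ‖v a‖ ^ 2 * ‖v b‖ ^ 2) (permMatrix_mem_unitaryGroup σ) j

theorem integral_norm_add_mul_pow_four [μ.IsMulLeftInvariant] {a b : n} (hab : a ≠ b) {ω : ℂ}
    (hω : ‖ω‖ = 1) (j : n) :
    ∫ U, ‖(U : Matrix n n ℂ) a j + ω * (U : Matrix n n ℂ) b j‖ ^ 4 ∂μ = 4 * colMoment μ j a a := by
  set S := (Equiv.swap a b).permMatrix ℂ
  set R : Matrix n n ℂ := (Real.sqrt 2 : ℂ)⁻¹ • (1 + Complex.I • S)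
  set d : n → ℂ := Function.update 1 b (-Complex.I * ω)
  have hR : R ∈ unitaryGroup n ℂ := by
    refine smul_one_add_I_smul_mem_unitary ?_ ?_
    · simp [IsSelfAdjoint, S, star_eq_conjTranspose]
    · rw [← permMatrix_mul, Equiv.swap_mul_self, permMatrix_one]
  have hD : diagonal d ∈ unitaryGroup n ℂ := diagonal_mem_unitaryGroup fun i => by
    rcases eq_or_ne i b with rfl | hi <;> simp [d, *]
  have hRD : ∀ v : n → ℂ, (R *ᵥ diagonal d *ᵥ v) a = (Real.sqrt 2 : ℂ)⁻¹ * (v a + ω * v b) := by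
    intro v
    simp only [R, S, d, smul_mulVec, add_mulVec, one_mulVec, permMatrix_mulVec, Pi.smul_apply,
      Pi.add_apply, smul_eq_mul, Function.comp_apply, Equiv.swap_apply_left, mulVec_diagonal,
      Function.update_self, Function.update_of_ne hab, Pi.one_apply, one_mul]
    linear_combination -((Real.sqrt 2 : ℂ)⁻¹ * ω * v b) * Complex.I_mul_I
  have hsqrt : ‖(Real.sqrt 2 : ℂ)⁻¹‖ ^ 4 = 4⁻¹ := by
    rw [norm_inv, Complex.norm_real, Real.norm_of_nonneg (Real.sqrt_nonneg 2), inv_pow,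
      show 4 = 2 * 2 from rfl, pow_mul, Real.sq_sqrt zero_le_two]
    norm_num
  calc ∫ U, ‖(U : Matrix n n ℂ) a j + ω * (U : Matrix n n ℂ) b j‖ ^ 4 ∂μ
      = 4 * ∫ U, ‖(R *ᵥ diagonal d *ᵥ fun i => (U : Matrix n n ℂ) i j) a‖ ^ 4 ∂μ := by
        simp only [hRD, norm_mul, mul_pow, hsqrt, integral_const_mul]
        ring
    _ = 4 * colMoment μ j a a := by
        rw [integral_comp_mulVec_col μ (fun v => ‖(R *ᵥ v) a‖ ^ 4) hD,
          integral_comp_mulVec_col μ (fun v => ‖v a‖ ^ 4) hR, colMoment]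
        simp only [← pow_add]

theorem colMoment_self_eq_two_mul [IsFiniteMeasure μ] [μ.IsMulLeftInvariant] {a b : n}
    (hab : a ≠ b) (j : n) : colMoment μ j a a = 2 * colMoment μ j a b := by
  have hint : ∀ f : unitaryGroup n ℂ → ℝ, Continuous f → Integrable f μ :=
    fun f hf => hf.integrable_of_compactSpace
  have h₁ := integral_norm_add_mul_pow_four μ hab (ω := 1) (by simp) j
  have h₂ := integral_norm_add_mul_pow_four μ hab (ω := -1) (by simp) j
  have h₃ := integral_norm_add_mul_pow_four μ hab (ω := Complex.I) (by simp) j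
  have h₄ := integral_norm_add_mul_pow_four μ hab (ω := -Complex.I) (by simp) j
  simp only [one_mul, neg_mul, ← sub_eq_add_neg] at h₁ h₂ h₄
  have hbb : colMoment μ j b b = colMoment μ j a a := by
    simpa using colMoment_perm μ (Equiv.swap a b) j a a
  have hsum : 16 * colMoment μ j a a =
      4 * colMoment μ j a a + 4 * colMoment μ j b b + 16 * colMoment μ j a b :=
    calc 16 * colMoment μ j a a
        = ∫ U, ‖(U : Matrix n n ℂ) a j + (U : Matrix n n ℂ) b j‖ ^ 4
            + ‖(U : Matrix n n ℂ) a j - (U : Matrix n n ℂ) b j‖ ^ 4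
            + ‖(U : Matrix n n ℂ) a j + Complex.I * (U : Matrix n n ℂ) b j‖ ^ 4
            + ‖(U : Matrix n n ℂ) a j - Complex.I * (U : Matrix n n ℂ) b j‖ ^ 4 ∂μ := by
          rw [integral_add (hint _ (by fun_prop)) (hint _ (by fun_prop)),
            integral_add (hint _ (by fun_prop)) (hint _ (by fun_prop)),
            integral_add (hint _ (by fun_prop)) (hint _ (by fun_prop)), h₁, h₂, h₃, h₄]
          ring
      _ = 4 * colMoment μ j a a + 4 * colMoment μ j b b + 16 * colMoment μ j a b := by
          simp only [Complex.norm_add_mul_pow_four_sum_phases]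
          rw [integral_add (hint _ (by fun_prop)) (hint _ (by fun_prop)),
            integral_add (hint _ (by fun_prop)) (hint _ (by fun_prop)),
            integral_const_mul, integral_const_mul, integral_const_mul]
          rfl
  linarith

theorem sum_colMoment [IsProbabilityMeasure μ] (j : n) :
    ∑ a, ∑ b, colMoment μ j a b = 1 := by
  have hint : ∀ f : unitaryGroup n ℂ → ℝ, Continuous f → Integrable f μ :=
    fun f hf => hf.integrable_of_compactSpace
  calc ∑ a, ∑ b, colMoment μ j a b
      = ∫ U, (∑ a, ‖(U : Matrix n n ℂ) a j‖ ^ 2) * ∑ b, ‖(U : Matrix n n ℂ) b j‖ ^ 2 ∂μ := by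
        simp only [Finset.sum_mul_sum]
        rw [integral_finsetSum _ fun a _ => hint _ (by fun_prop)]
        refine Finset.sum_congr rfl fun a _ => ?_
        rw [integral_finsetSum _ fun b _ => hint _ (by fun_prop)]
        rfl
    _ = 1 := by simp [sum_norm_sq_apply_of_mem_unitaryGroup (SetLike.coe_mem _)]

theorem colMoment_eq [IsProbabilityMeasure μ] [μ.IsMulLeftInvariant] (j a b : n) :
    colMoment μ j a b = (if a = b then 2 else 1) / (Fintype.card n * (Fintype.card n + 1)) := by
  set A := colMoment μ j a a
  have hdiag : ∀ c, colMoment μ j c c = A := fun c => by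
    simpa using (colMoment_perm μ (Equiv.swap c a) j c c).symm
  have hweight : ∀ c d, 2 * colMoment μ j c d = (if c = d then 2 else 1) * A := by
    intro c d
    split_ifs with h
    · rw [h, hdiag]
    · rw [← hdiag c, colMoment_self_eq_two_mul μ h j, one_mul]
  have hA : Fintype.card n * (Fintype.card n + 1) * A = 2 :=
    calc _ = ∑ c : n, ∑ d : n, (if c = d then 2 else 1) * A := by
          have h21 : ∀ c d : n, (if c = d then (2 : ℝ) else 1) = 1 + if c = d then 1 else 0 :=
            fun c d => by split_ifs <;> norm_num
          simp only [h21, add_mul, one_mul, ite_mul, zero_mul, Finset.sum_add_distrib,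
            Finset.sum_ite_eq, Finset.mem_univ, if_true, Finset.sum_const, Finset.card_univ,
            nsmul_eq_mul]
          ring
      _ = 2 * ∑ c, ∑ d, colMoment μ j c d := by simp only [← hweight, Finset.mul_sum]
      _ = 2 := by rw [sum_colMoment, mul_one]
  have hN : (Fintype.card n : ℝ) * (Fintype.card n + 1) ≠ 0 := by
    rintro h; rw [h, zero_mul] at hA; norm_num at hA
  rw [eq_div_iff hN]
  linear_combination (Fintype.card n * (Fintype.card n + 1) / 2) * hweight a b +
    (if a = b then (2 : ℝ) else 1) / 2 * hA

end HaarColumn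

section PhaseKernel

variable {N : ℕ} (φ : Fin N × Fin N → ℝ)

theorem uniMat_apply_mul_conj (j k : Fin N) :
    uniMat N φ j k * starRingEnd ℂ (uniMat N φ j k) = 1 := by
  rw [Complex.mul_conj', uniMat, of_apply, Complex.norm_exp_I_mul_ofReal]
  simp

noncomputable def phaseKernel (p q : Fin N × Fin N) : ℂ :=
  uniMat N φ p.1 q.1 * starRingEnd ℂ (uniMat N φ p.2 q.1) *
    (uniMat N φ p.2 q.2 * starRingEnd ℂ (uniMat N φ p.1 q.2))

theorem phaseKernel_diag_left (a : Fin N) (q : Fin N × Fin N) : phaseKernel φ (a, a) q = 1 := by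
  simp [phaseKernel, uniMat_apply_mul_conj]

theorem phaseKernel_diag_right (p : Fin N × Fin N) (l : Fin N) : phaseKernel φ p (l, l) = 1 := by
  rw [phaseKernel, mul_mul_mul_comm, mul_comm (starRingEnd ℂ _), mul_mul_mul_comm,
    uniMat_apply_mul_conj, uniMat_apply_mul_conj, one_mul]

theorem sum_phaseKernel :
    ∑ p, ∑ q, phaseKernel φ p q = (N : ℂ) ^ 4 * trace (uniRho N φ * uniRho N φ) := by
  have hX : ∑ p, ∑ q, phaseKernel φ p q =
      trace (uniMat N φ * (uniMat N φ)ᴴ * (uniMat N φ * (uniMat N φ)ᴴ)) := by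
    simp only [trace, diag_apply, mul_apply, conjTranspose_apply, RCLike.star_def,
      Fintype.sum_prod_type, Finset.sum_mul_sum, phaseKernel]
  rcases eq_or_ne N 0 with rfl | hN
  · simp
  rw [hX, uniRho, smul_mul_smul_comm, trace_smul, smul_eq_mul, ← mul_assoc]
  field_simp

theorem trace_rdm_mul_self (ψ₁ ψ₂ : Fin N → ℂ) :
    trace (rdm N φ ψ₁ ψ₂ * rdm N φ ψ₁ ψ₂) =
      ∑ p, ∑ q, phaseKernel φ p q * ((‖ψ₁ p.1‖ ^ 2 * ‖ψ₁ p.2‖ ^ 2 : ℝ) : ℂ) *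
        ((‖ψ₂ q.1‖ ^ 2 * ‖ψ₂ q.2‖ ^ 2 : ℝ) : ℂ) := by
  have hexp : ∀ a b l, Complex.exp (Complex.I * ((φ (a, l) : ℂ) - (φ (b, l) : ℂ))) =
      uniMat N φ a l * starRingEnd ℂ (uniMat N φ b l) := fun a b l => by
    rw [uniMat, of_apply, of_apply, ← Complex.exp_conj, ← Complex.exp_add]
    congr 1
    simp only [map_mul, Complex.conj_I, Complex.conj_ofReal]
    ring
  simp only [trace, diag_apply, mul_apply, rdm, of_apply, hexp, Fintype.sum_prod_type,
    Finset.sum_mul_sum, phaseKernel]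
  refine Finset.sum_congr rfl fun a _ => Finset.sum_congr rfl fun b _ =>
    Finset.sum_congr rfl fun l _ => Finset.sum_congr rfl fun l' _ => ?_
  push_cast
  simp only [← Complex.mul_conj']
  ring

theorem sum_phaseKernel_mul_weights :
    ∑ p, ∑ q, phaseKernel φ p q * (if p.1 = p.2 then 2 else 1) * (if q.1 = q.2 then 2 else 1) =
      (N : ℂ) ^ 2 + 2 * (N : ℂ) ^ 3 + (N : ℂ) ^ 4 * trace (uniRho N φ * uniRho N φ) := by
  have hw : ∀ p : Fin N × Fin N,
      (if p.1 = p.2 then (2 : ℂ) else 1) = 1 + if p.1 = p.2 then 1 else 0 :=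
    fun p => by split_ifs <;> norm_num
  simp only [hw, mul_add, mul_one, Finset.sum_add_distrib, mul_ite, mul_zero,
    ← Finset.ite_sum_zero, Fintype.sum_ite_fst_eq_snd, phaseKernel_diag_left,
    phaseKernel_diag_right, Finset.sum_const, Finset.card_univ, Fintype.card_prod, Fintype.card_fin, nsmul_eq_mul, sum_phaseKernel]
  push_cast
  ring

end PhaseKernel

theorem avg_purity_reduced_state (N : ℕ) (hN : 0 < N)
    [MeasurableSpace (Matrix.unitaryGroup (Fin N) ℂ)]
    [BorelSpace (Matrix.unitaryGroup (Fin N) ℂ)]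
    (μ : Measure (Matrix.unitaryGroup (Fin N) ℂ))
    [IsProbabilityMeasure μ] [μ.IsMulLeftInvariant]
    (φ : Fin N × Fin N → ℝ) :
    (∫ U₁, ∫ U₂,
        Matrix.trace
          (rdm N φ (fun α => (U₁ : Matrix (Fin N) (Fin N) ℂ) α ⟨0, hN⟩)
              (fun l => (U₂ : Matrix (Fin N) (Fin N) ℂ) l ⟨0, hN⟩) *
            rdm N φ (fun α => (U₁ : Matrix (Fin N) (Fin N) ℂ) α ⟨0, hN⟩)
              (fun l => (U₂ : Matrix (Fin N) (Fin N) ℂ) l ⟨0, hN⟩)) ∂μ ∂μ) =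
      ((N : ℂ) ^ 2 + 2 * (N : ℂ) ^ 3 +
          (N : ℂ) ^ 4 * Matrix.trace (uniRho N φ * uniRho N φ)) /
        ((N : ℂ) ^ 2 * ((N : ℂ) + 1) ^ 2) := by
  set j : Fin N := ⟨0, hN⟩
  have hint : ∀ p : Fin N × Fin N, Integrable (fun U : unitaryGroup (Fin N) ℂ =>
      ((‖(U : Matrix _ _ ℂ) p.1 j‖ ^ 2 * ‖(U : Matrix _ _ ℂ) p.2 j‖ ^ 2 : ℝ) : ℂ)) μ :=
    fun p => Continuous.integrable_of_compactSpace (by fun_prop)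
  have hmoment : ∀ p : Fin N × Fin N, ∫ U : unitaryGroup (Fin N) ℂ,
      ((‖(U : Matrix _ _ ℂ) p.1 j‖ ^ 2 * ‖(U : Matrix _ _ ℂ) p.2 j‖ ^ 2 : ℝ) : ℂ) ∂μ =
      (if p.1 = p.2 then 2 else 1) / ((N : ℂ) * (N + 1)) := fun p => by
    rw [integral_complex_ofReal, ← colMoment, colMoment_eq, Fintype.card_fin]
    split_ifs <;> push_cast <;> rfl
  simp only [trace_rdm_mul_self]
  rw [integral_integral_sum_sum_mul _ hint hint, ← sum_phaseKernel_mul_weights, Finset.sum_div]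
  simp only [hmoment, Finset.sum_div]
  refine Finset.sum_congr rfl fun p _ => Finset.sum_congr rfl fun q _ => ?_
  simp only [div_eq_mul_inv, mul_inv, ← inv_pow]
  ring
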